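/- arXiv:1911.10308 — 3 statements merged into one kernel-verified Lean document; each statement's English description precedes it below -/
import Mathlib

section
/- There exists an absolute constant C > 0 such that the following holds. Let p be an odd prime, G a subgroup of the multiplicative group 𝔽_p*, and g, h : G → 𝔽_p* arbitrary functions. Define f(x,y) = g(x)(h(x)+y) on G × 𝔽_p* and set m = μ(g·h), where (g·h)(x) := g(x)h(x). Then for all nonempty finite subsets A ⊆ G and B, C ⊆ 𝔽_p*, one has |f(A,B)| · |B·C| ≥ C · min{ |A||B|²|C| / (p m²) , p|B| / m }. -/
open Finset Pointwise

/-- `muOn G g` is `max_{t ∈ 𝔽_p*} |{x ∈ G : g x = t}|`. -/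
def muOn {p : ℕ} [NeZero p] (G : Finset (ZMod p)) (g : ZMod p → ZMod p) : ℕ :=
  Finset.sup (Finset.univ.filter fun t : ZMod p => t ≠ 0)
    (fun t => (G.filter fun x => g x = t).card)

/-!
Put `D = f(A, B)` and `E = B·C`. Each `(a, b, c) ∈ A × B × C` yields the solution
`(e, c, a, d) = (bc, c, a, f(a, b))` of `e = c (d - g(a)h(a)) / g(a)` in `E × C × A × D`,
and distinct triples yield distinct solutions. Counting solutions with the `p - 1` multiplicative
characters, the trivial character contributes `|E||C||A||D|`. For `χ ≠ 1` the sums over `E` and `C`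
are handled by Cauchy–Schwarz and orthogonality, giving `(p - 1) √(|E||C|)`, and the sum over
`(a, d)` by Cauchy–Schwarz, the fibre bound `m` for `a ↦ g(a)h(a)` and the Jacobi-sum identity
`∑ₓ |∑_{d ∈ D} χ(d - x)|² = |D| (p - |D|)`, giving `√(|A| m p |D|)`. Whichever of the two
contributions dominates yields one of the two terms of the minimum, with constant `1/4`.
-/

theorem Finset.sum_comp_le_mul_sum {α β : Type*} [Fintype β] [DecidableEq β] {A : Finset α}
    {f : α → β} {m : ℕ} (hm : ∀ t, #{a ∈ A | f a = t} ≤ m) {w : β → ℝ} (hw : ∀ t, 0 ≤ w t) :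
    ∑ a ∈ A, w (f a) ≤ m * ∑ t, w t := by
  rw [← sum_fiberwise A f (fun a => w (f a)), mul_sum]
  refine sum_le_sum fun t _ => ?_
  rw [sum_congr rfl fun a ha => by rw [(mem_filter.mp ha).2], sum_const, nsmul_eq_mul]
  exact mul_le_mul_of_nonneg_right (by exact_mod_cast hm t) (hw t)

namespace MulChar

theorem norm_apply_le_one {M : Type*} [CommMonoid M] [Finite Mˣ] (χ : MulChar M ℂ) (a : M) :
    ‖χ a‖ ≤ 1 := by
  by_cases ha : IsUnit a
  · obtain ⟨u, rfl⟩ := ha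
    refine ((pow_eq_one_iff_of_nonneg (norm_nonneg _) (Nat.card_pos (α := Mˣ)).ne').mp ?_).le
    rw [← norm_pow, ← map_pow, ← Units.val_pow_eq_pow_val, pow_card_eq_one', Units.val_one,
      map_one, norm_one]
  · rw [χ.map_nonunit ha, norm_zero]
    exact zero_le_one

theorem norm_sum_apply_le_card {M ι : Type*} [CommMonoid M] [Finite Mˣ] (χ : MulChar M ℂ)
    (s : Finset ι) (f : ι → M) : ‖∑ i ∈ s, χ (f i)‖ ≤ #s :=
  (norm_sum_le _ _).trans <| (sum_le_card_nsmul _ _ 1 fun i _ => χ.norm_apply_le_one _).trans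
    (by simp)

theorem apply_mul_inv_apply {M R : Type*} [CommMonoid M] [CommRing R] (χ : MulChar M R) {s : M}
    (hs : IsUnit s) : χ s * χ⁻¹ s = 1 := by
  rw [← mul_apply, mul_inv_cancel, one_apply hs]

variable {F : Type*} [Field F] [Fintype F]

theorem norm_sq_sum_apply {ι : Type*} (χ : MulChar F ℂ) (s : Finset ι) (f : ι → F) :
    (‖∑ i ∈ s, χ (f i)‖ ^ 2 : ℂ) = ∑ i ∈ s, ∑ j ∈ s, χ (f i) * χ⁻¹ (f j) := by
  simp only [← Complex.mul_conj', map_sum, sum_mul_sum, starRingEnd_apply, star_apply']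

variable [DecidableEq F]

theorem sum_apply_sub_mul_inv_apply_sub {R : Type*} [CommRing R] [IsDomain R] {χ : MulChar F R}
    (hχ : χ ≠ 1) (d d' : F) :
    ∑ x, χ (d - x) * χ⁻¹ (d' - x) = if d = d' then (Fintype.card F - 1 : R) else -1 := by
  split_ifs with hdd
  · subst hdd
    rw [Fintype.sum_bijective (d - ·) (Equiv.subLeft d).bijective _ (fun u => χ u * χ⁻¹ u)
      fun _ => rfl]
    simp only [← mul_apply, mul_inv_cancel, sum_one_eq_card_units, Fintype.card_units]
    rw [Nat.cast_sub Fintype.card_pos, Nat.cast_one]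
  · have hs : d - d' ≠ 0 := sub_ne_zero.mpr hdd
    have hbij : Function.Bijective fun y => d - (d - d') * y :=
      (Equiv.subLeft d).bijective.comp (mulLeft_bijective₀ _ hs)
    rw [← Fintype.sum_bijective _ hbij _ _ fun _ => rfl]
    -- substituting `x = d - (d - d') y` turns the sum into `χ⁻¹(-1) J(χ, χ⁻¹)`
    have key (y : F) : χ (d - (d - (d - d') * y)) * χ⁻¹ (d' - (d - (d - d') * y))
        = χ⁻¹ (-1) * (χ y * χ⁻¹ (1 - y)) := by
      rw [show d - (d - (d - d') * y) = (d - d') * y by ring,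
        show d' - (d - (d - d') * y) = -1 * ((d - d') * (1 - y)) by ring]
      simp only [map_mul]
      linear_combination (χ y * χ⁻¹ (1 - y) * χ⁻¹ (-1)) * χ.apply_mul_inv_apply hs.isUnit
    rw [sum_congr rfl fun y _ => key y, ← mul_sum, ← jacobiSum, jacobiSum_nontrivial_inv hχ,
      mul_neg, mul_comm, χ.apply_mul_inv_apply isUnit_one.neg]

theorem sum_norm_sq_sum_apply_sub {χ : MulChar F ℂ} (hχ : χ ≠ 1) (D : Finset F) :
    ∑ x, ‖∑ d ∈ D, χ (d - x)‖ ^ 2 = #D * (Fintype.card F - #D : ℝ) := by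
  apply Complex.ofReal_injective
  push_cast
  have row (d : F) (hd : d ∈ D) :
      ∑ d' ∈ D, ∑ x, χ (d - x) * χ⁻¹ (d' - x) = Fintype.card F - #D := by
    have split (d' : F) : (if d = d' then (Fintype.card F - 1 : ℂ) else -1)
        = (if d = d' then (Fintype.card F : ℂ) else 0) - 1 := by
      split_ifs <;> ring
    simp only [sum_apply_sub_mul_inv_apply_sub hχ, split, sum_sub_distrib, sum_ite_eq, if_pos hd,
      sum_const, nsmul_one]
  simp only [norm_sq_sum_apply]
  rw [sum_comm, sum_congr rfl fun d _ => sum_comm, sum_congr rfl row, sum_const, nsmul_eq_mul]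

theorem norm_sq_sum_sum_apply_le {α : Type*} {χ : MulChar F ℂ} (hχ : χ ≠ 1) {A : Finset α}
    {x : α → F} {m : ℕ} (hm : ∀ t, #{a ∈ A | x a = t} ≤ m) (y : α → F) (D : Finset F) :
    ‖∑ a ∈ A, ∑ d ∈ D, χ ((d - x a) * y a)‖ ^ 2 ≤ #A * (m * (Fintype.card F * #D)) := by
  have hterm (a : α) : ‖∑ d ∈ D, χ ((d - x a) * y a)‖ ≤ ‖∑ d ∈ D, χ (d - x a)‖ := by
    simp only [map_mul, ← sum_mul, norm_mul]
    exact mul_le_of_le_one_right (norm_nonneg _) (χ.norm_apply_le_one _)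
  have hD : ∑ t, ‖∑ d ∈ D, χ (d - t)‖ ^ 2 ≤ Fintype.card F * #D := by
    rw [sum_norm_sq_sum_apply_sub hχ, mul_comm]
    exact mul_le_mul_of_nonneg_right (sub_le_self _ (Nat.cast_nonneg _)) (Nat.cast_nonneg _)
  calc ‖∑ a ∈ A, ∑ d ∈ D, χ ((d - x a) * y a)‖ ^ 2
      ≤ (∑ a ∈ A, ‖∑ d ∈ D, χ (d - x a)‖) ^ 2 := by
        gcongr
        exact (norm_sum_le _ _).trans (sum_le_sum fun a _ => hterm a)
    _ ≤ #A * ∑ a ∈ A, ‖∑ d ∈ D, χ (d - x a)‖ ^ 2 := sq_sum_le_card_mul_sum_sq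
    _ ≤ #A * (m * (Fintype.card F * #D)) := by
        gcongr
        exact (sum_comp_le_mul_sum hm (w := fun t => ‖∑ d ∈ D, χ (d - t)‖ ^ 2)
          fun t => by positivity).trans (by gcongr)

end MulChar

namespace DirichletCharacter

theorem star_apply_of_isUnit {n : ℕ} (χ : DirichletCharacter ℂ n) {a : ZMod n} (ha : IsUnit a) :
    star (χ a) = χ a⁻¹ := by
  obtain ⟨u, rfl⟩ := ha
  rw [MulChar.star_apply', MulChar.inv_apply, Ring.inverse_unit, ZMod.inv_coe_unit]

variable {n : ℕ} [NeZero n]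

theorem sum_sum_inv_mul_eq {ι : Type*} (s : Finset ι) {u : ι → ZMod n}
    (hu : ∀ i ∈ s, IsUnit (u i)) (v : ι → ZMod n) :
    ∑ χ : DirichletCharacter ℂ n, ∑ i ∈ s, χ (u i)⁻¹ * χ (v i)
      = n.totient * #{i ∈ s | u i = v i} := by
  rw [sum_comm, sum_congr rfl fun i hi => sum_char_inv_mul_char_eq ℂ (hu i hi) (v i),
    sum_ite, sum_const_zero, add_zero, sum_const, nsmul_eq_mul, mul_comm]

theorem sum_norm_sq_sum_eq {S : Finset (ZMod n)} (hS : ∀ s ∈ S, IsUnit s) :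
    ∑ χ : DirichletCharacter ℂ n, ‖∑ s ∈ S, χ s‖ ^ 2 = n.totient * #S := by
  apply Complex.ofReal_injective
  push_cast
  have h (χ : DirichletCharacter ℂ n) :
      (‖∑ s ∈ S, χ s‖ ^ 2 : ℂ) = ∑ q ∈ S ×ˢ S, χ q.1⁻¹ * χ q.2 := by
    rw [← Complex.mul_conj', mul_comm, map_sum, sum_mul_sum, sum_product]
    refine sum_congr rfl fun s hs => sum_congr rfl fun _ _ => ?_
    rw [starRingEnd_apply, χ.star_apply_of_isUnit (hS s hs)]
  simp only [h]
  rw [sum_sum_inv_mul_eq _ (fun q hq => hS q.1 (mem_product.mp hq).1), ← diag_eq_filter,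
    diag_card]

theorem sum_norm_mul_norm_le {S T : Finset (ZMod n)} (hS : ∀ s ∈ S, IsUnit s)
    (hT : ∀ t ∈ T, IsUnit t) :
    ∑ χ : DirichletCharacter ℂ n, ‖∑ s ∈ S, χ s‖ * ‖∑ t ∈ T, χ t‖ ≤ n.totient * √(#S * #T) := by
  refine (Real.sum_mul_le_sqrt_mul_sqrt _ _ _).trans_eq ?_
  rw [sum_norm_sq_sum_eq hS, sum_norm_sq_sum_eq hT, ← Real.sqrt_mul (by positivity),
    mul_mul_mul_comm, Real.sqrt_mul (by positivity), Real.sqrt_mul_self (by positivity)]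

end DirichletCharacter

theorem card_filter_le_muOn {p : ℕ} [NeZero p] {G A : Finset (ZMod p)} (hAG : A ⊆ G)
    {f : ZMod p → ZMod p} (hf : ∀ a ∈ A, f a ≠ 0) (t : ZMod p) :
    #{a ∈ A | f a = t} ≤ muOn G f := by
  obtain hempty | ⟨a, ha⟩ := (filter (fun a => f a = t) A).eq_empty_or_nonempty
  · simp [hempty]
  · obtain ⟨haA, rfl⟩ := mem_filter.mp ha
    exact (card_le_card (filter_subset_filter _ hAG)).trans <|
      le_sup (f := fun t => #{x ∈ G | f x = t}) (mem_filter.mpr ⟨mem_univ _, hf a haA⟩)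

theorem one_le_muOn {p : ℕ} [NeZero p] {G A : Finset (ZMod p)} (hAG : A ⊆ G)
    {f : ZMod p → ZMod p} (hf : ∀ a ∈ A, f a ≠ 0) (hA : A.Nonempty) : 1 ≤ muOn G f := by
  obtain ⟨a, ha⟩ := hA
  have hfiber : 0 < #{a' ∈ A | f a' = f a} := card_pos.mpr ⟨a, mem_filter.mpr ⟨ha, rfl⟩⟩
  exact hfiber.trans_le (card_filter_le_muOn hAG hf (f a))

theorem quarter_min_le_of_le_add_mul_sqrt {a b c d e m p : ℝ} (ha : 0 < a) (hb : 0 ≤ b)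
    (hc : 0 < c) (hm : 1 ≤ m) (hp : 2 ≤ p)
    (h : (p - 1) * (a * b * c) ≤ e * c * (a * d) + (p - 1) * √(e * c * (a * (m * (p * d))))) :
    1 / 4 * min (a * b ^ 2 * c / (p * m ^ 2)) (p * b / m) ≤ d * e := by
  by_cases hcase : (p - 1) * b ≤ 2 * (d * e)
  · calc 1 / 4 * min (a * b ^ 2 * c / (p * m ^ 2)) (p * b / m)
        ≤ 1 / 4 * (p * b) := by
          gcongr
          exact (min_le_right _ _).trans (div_le_self (by positivity) hm)
      _ ≤ d * e := by nlinarith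
  · push Not at hcase
    have hsqrt : a * b * c / 2 < √(e * c * (a * (m * (p * d)))) := by
      have : e * c * (a * d) < (p - 1) * (a * b * c) / 2 := by nlinarith [mul_pos ha hc]
      nlinarith
    have hsq : a * b ^ 2 * c < 4 * (d * e) * (p * m) := by
      have := (Real.lt_sqrt (by positivity)).mp hsqrt
      nlinarith [mul_pos ha hc]
    calc 1 / 4 * min (a * b ^ 2 * c / (p * m ^ 2)) (p * b / m)
        ≤ 1 / 4 * (a * b ^ 2 * c / (p * m)) := by
          gcongr
          refine (min_le_left _ _).trans
            (div_le_div_of_nonneg_left (by positivity) (by positivity) ?_)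
          nlinarith [mul_le_mul_of_nonneg_left hm (by positivity : 0 ≤ p * m)]
      _ ≤ d * e := by
          rw [← le_div_iff₀' (by norm_num), div_le_iff₀ (by positivity)]
          linarith

namespace HegyvariHennecart

/-- The tuples `((e, c), (a, d))` with `e = c (d - x a) (y a)`. -/
def solutions {R α : Type*} [CommRing R] [DecidableEq R] (x y : α → R) (E C : Finset R)
    (A : Finset α) (D : Finset R) : Finset ((R × R) × (α × R)) :=
  {q ∈ (E ×ˢ C) ×ˢ (A ×ˢ D) | q.1.1 = q.1.2 * ((q.2.2 - x q.2.1) * y q.2.1)}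

theorem card_mul_card_mul_card_le_card_solutions {K : Type*} [Field K] [DecidableEq K]
    {g : K → K} (h : K → K) {A : Finset K} (hg : ∀ a ∈ A, g a ≠ 0) (B : Finset K)
    {C : Finset K} (hC : (0 : K) ∉ C) :
    #A * #B * #C ≤ #(solutions (fun a => g a * h a) (fun a => (g a)⁻¹) (B * C) C A
      (image₂ (fun a b => g a * (h a + b)) A B)) := by
  rw [mul_assoc, ← card_product, ← card_product]
  refine card_le_card_of_injOn
    (fun t => ((t.2.1 * t.2.2, t.2.2), (t.1, g t.1 * (h t.1 + t.2.1)))) ?_ ?_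
  · rintro ⟨a, b, c⟩ habc
    obtain ⟨ha, hb, hc⟩ : a ∈ A ∧ b ∈ B ∧ c ∈ C := by simpa using habc
    simp only [solutions, mem_coe, mem_filter, mem_product]
    refine ⟨⟨⟨mul_mem_mul hb hc, hc⟩, ha, mem_image₂_of_mem ha hb⟩, ?_⟩
    field_simp [hg a ha]
    ring
  · rintro ⟨a, b, c⟩ habc ⟨a', b', c'⟩ - heq
    obtain ⟨-, -, hc⟩ : a ∈ A ∧ b ∈ B ∧ c ∈ C := by simpa using habc
    simp only [Prod.mk.injEq] at heq
    obtain ⟨⟨hbc, rfl⟩, rfl, -⟩ := heq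
    rw [mul_right_cancel₀ (ne_of_mem_of_not_mem hc hC) hbc]

theorem totient_mul_card_solutions_eq {n : ℕ} [NeZero n] {α : Type*} (x y : α → ZMod n)
    {E : Finset (ZMod n)} (hE : ∀ e ∈ E, IsUnit e) (C : Finset (ZMod n)) (A : Finset α)
    (D : Finset (ZMod n)) :
    (n.totient : ℂ) * #(solutions x y E C A D) = ∑ χ : DirichletCharacter ℂ n,
      star (∑ e ∈ E, χ e) * (∑ c ∈ C, χ c) * ∑ a ∈ A, ∑ d ∈ D, χ ((d - x a) * y a) := by
  rw [solutions, ← DirichletCharacter.sum_sum_inv_mul_eq _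
    (fun q hq => hE q.1.1 (mem_product.mp (mem_product.mp hq).1).1)]
  refine sum_congr rfl fun χ _ => ?_
  have hsplit (q : (ZMod n × ZMod n) × (α × ZMod n)) :
      χ q.1.1⁻¹ * χ (q.1.2 * ((q.2.2 - x q.2.1) * y q.2.1))
        = χ q.1.1⁻¹ * χ q.1.2 * χ ((q.2.2 - x q.2.1) * y q.2.1) := by
    rw [map_mul, mul_assoc]
  calc ∑ q ∈ (E ×ˢ C) ×ˢ (A ×ˢ D), χ q.1.1⁻¹ * χ (q.1.2 * ((q.2.2 - x q.2.1) * y q.2.1))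
      = (∑ q ∈ E ×ˢ C, χ q.1⁻¹ * χ q.2) * ∑ r ∈ A ×ˢ D, χ ((r.2 - x r.1) * y r.1) := by
        rw [sum_congr rfl fun q _ => hsplit q, sum_mul_sum]
        exact sum_product _ _ _
    _ = _ := by
        rw [sum_product (s := E), sum_product (s := A), star_sum, sum_mul_sum E C]
        congr 1
        exact sum_congr rfl fun e he => by rw [χ.star_apply_of_isUnit (hE e he)]

theorem totient_mul_card_solutions_le {p : ℕ} [Fact p.Prime] {α : Type*} {A : Finset α}
    {x : α → ZMod p} {m : ℕ} (hm : ∀ t, #{a ∈ A | x a = t} ≤ m) (y : α → ZMod p)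
    {E C : Finset (ZMod p)} (hE : (0 : ZMod p) ∉ E) (hC : (0 : ZMod p) ∉ C) (D : Finset (ZMod p)) :
    ((p : ℝ) - 1) * #(solutions x y E C A D)
      ≤ #E * #C * (#A * #D) + ((p : ℝ) - 1) * √(#E * #C * (#A * (m * (p * #D)))) := by
  have hunit {S : Finset (ZMod p)} (hS : (0 : ZMod p) ∉ S) : ∀ s ∈ S, IsUnit s :=
    fun s hs => isUnit_iff_ne_zero.mpr (ne_of_mem_of_not_mem hs hS)
  have htotient : ((p.totient : ℕ) : ℝ) = p - 1 := by
    rw [Nat.totient_prime Fact.out, Nat.cast_sub (Fact.out : p.Prime).one_le, Nat.cast_one]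
  set SE := fun χ : DirichletCharacter ℂ p => ∑ e ∈ E, χ e
  set SC := fun χ : DirichletCharacter ℂ p => ∑ c ∈ C, χ c
  set T := fun χ : DirichletCharacter ℂ p => ∑ a ∈ A, ∑ d ∈ D, χ ((d - x a) * y a)
  have htrivial : ‖SE 1‖ * ‖SC 1‖ * ‖T 1‖ ≤ #E * #C * (#A * #D) := by
    have hT : ‖T 1‖ ≤ #A * #D := (norm_sum_le _ _).trans <|
      (sum_le_card_nsmul _ _ _ fun a _ => MulChar.norm_sum_apply_le_card _ _ _).trans (by simp)
    gcongr
    · exact MulChar.norm_sum_apply_le_card _ _ _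
    · exact MulChar.norm_sum_apply_le_card _ _ _
  have hnontrivial (χ : DirichletCharacter ℂ p) (hχ : χ ≠ 1) :
      ‖T χ‖ ≤ √(#A * (m * (p * #D))) := by
    refine Real.le_sqrt_of_sq_le ?_
    simpa only [ZMod.card] using MulChar.norm_sq_sum_sum_apply_le hχ hm y D
  calc ((p : ℝ) - 1) * #(solutions x y E C A D)
      = ‖∑ χ : DirichletCharacter ℂ p, star (SE χ) * SC χ * T χ‖ := by
        rw [← totient_mul_card_solutions_eq x y (hunit hE), ← htotient]
        norm_cast
    _ ≤ ∑ χ : DirichletCharacter ℂ p, ‖SE χ‖ * ‖SC χ‖ * ‖T χ‖ :=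
        (norm_sum_le _ _).trans_eq (by simp only [norm_mul, norm_star])
    _ = ‖SE 1‖ * ‖SC 1‖ * ‖T 1‖ + ∑ χ ∈ univ.erase 1, ‖SE χ‖ * ‖SC χ‖ * ‖T χ‖ :=
        (add_sum_erase _ _ (mem_univ _)).symm
    _ ≤ #E * #C * (#A * #D)
          + (∑ χ : DirichletCharacter ℂ p, ‖SE χ‖ * ‖SC χ‖) * √(#A * (m * (p * #D))) := by
        rw [sum_mul]
        refine add_le_add htrivial ?_
        calc ∑ χ ∈ univ.erase 1, ‖SE χ‖ * ‖SC χ‖ * ‖T χ‖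
            ≤ ∑ χ ∈ univ.erase 1, ‖SE χ‖ * ‖SC χ‖ * √(#A * (m * (p * #D))) :=
              sum_le_sum fun χ hχ => by gcongr; exact hnontrivial χ (ne_of_mem_erase hχ)
          _ ≤ _ := sum_le_sum_of_subset_of_nonneg (subset_univ _) fun _ _ _ => by positivity
    _ ≤ #E * #C * (#A * #D) + ((p : ℝ) - 1) * √(#E * #C) * √(#A * (m * (p * #D))) := by
        gcongr
        rw [← htotient]
        exact DirichletCharacter.sum_norm_mul_norm_le (hunit hE) (hunit hC)
    _ = _ := by rw [mul_assoc ((p : ℝ) - 1), ← Real.sqrt_mul (by positivity)]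

end HegyvariHennecart

theorem hegyvari_hennecart_product :
    ∃ C > (0:ℝ),
      ∀ (p : ℕ) [Fact p.Prime], p ≠ 2 →
      ∀ G : Finset (ZMod p),
      (0:ZMod p) ∉ G → (1:ZMod p) ∈ G →
      (∀ x ∈ G, ∀ y ∈ G, x * y ∈ G) → (∀ x ∈ G, x⁻¹ ∈ G) →
      ∀ g h : ZMod p → ZMod p,
      (∀ x ∈ G, g x ≠ 0) → (∀ x ∈ G, h x ≠ 0) →
      ∀ A B Cs : Finset (ZMod p),
      A ⊆ G → A.Nonempty → B.Nonempty → Cs.Nonempty →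
      (0:ZMod p) ∉ B → (0:ZMod p) ∉ Cs →
      C * min ((A.card : ℝ) * (B.card : ℝ) ^ 2 * (Cs.card : ℝ) /
                ((p : ℝ) * ((muOn G (fun x => g x * h x) : ℕ) : ℝ) ^ 2))
              ((p : ℝ) * (B.card : ℝ) / ((muOn G (fun x => g x * h x) : ℕ) : ℝ)) ≤
        ((Finset.image₂ (fun x y => g x * (h x + y)) A B).card : ℝ) * ((B * Cs).card : ℝ) := by
  refine ⟨1 / 4, by norm_num, ?_⟩
  intro p hp _ G _ _ _ _ g h hg hh A B Cs hAG hA _ hC hB0 hC0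
  have hp2 : (2 : ℝ) ≤ p := by exact_mod_cast hp.out.two_le
  have hgA : ∀ a ∈ A, g a ≠ 0 := fun a ha => hg a (hAG ha)
  have hghA : ∀ a ∈ A, g a * h a ≠ 0 := fun a ha => mul_ne_zero (hgA a ha) (hh a (hAG ha))
  have hBC : (0 : ZMod p) ∉ B * Cs := by
    simp only [mem_mul, mul_eq_zero, not_exists, not_and]
    rintro b hb c hc (rfl | rfl)
    exacts [hB0 hb, hC0 hc]
  have hsolutions := HegyvariHennecart.card_mul_card_mul_card_le_card_solutions h hgA B hC0
  have hcharacters := HegyvariHennecart.totient_mul_card_solutions_le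
    (card_filter_le_muOn hAG hghA) (fun a => (g a)⁻¹) hBC hC0
    (image₂ (fun x y => g x * (h x + y)) A B)
  refine quarter_min_le_of_le_add_mul_sqrt (by exact_mod_cast hA.card_pos) (by positivity)
    (by exact_mod_cast hC.card_pos) (by exact_mod_cast one_le_muOn hAG hghA hA) hp2 ?_
  refine le_trans ?_ hcharacters
  gcongr
  · linarith
  · exact_mod_cast hsolutions
end

section
/- Let 𝔽_q be a finite field with q elements, q odd. For every finite subset A ⊆ 𝔽_q, writing m = |A+A| and n = |A·A|, one has |A|² ≤ mn|A|/q + q^{1/2}·√(mn). -/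
/-!
Vinh's point–line incidence argument. Over the `q²` non-vertical lines of `F²`, the numbers of
points of a grid `S × T` on each line have mean `|S||T|/q` and total squared deviation
`|S||T|(q - |T|)`, because two points with distinct abscissae lie on exactly one common line;
Cauchy–Schwarz then bounds the incidences with any set `L` of lines by
`|L||S||T|/q + √(|L||S||T|(q - |T|))`. Apply this to the grid `(A + A) × (A·A)` and the lines
`y = b (x - a)`, `a ∈ A`, `0 ≠ b ∈ A`, each of which contains the `|A|` grid points
`(a + c, b c)`, `c ∈ A`.
-/

open Finset Pointwise

namespace VinhSumProduct

lemma sum_sum_ite_eq {α : Type*} [DecidableEq α] (S : Finset α) (a b : ℝ) :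
    ∑ x ∈ S, ∑ x' ∈ S, (if x = x' then a else b) = #S * a + (#S ^ 2 - #S) * b := by
  have h (x x' : α) : (if x = x' then a else b) = b + if x = x' then a - b else 0 := by
    split_ifs <;> ring
  simp only [h, sum_add_distrib, sum_ite_eq, sum_const, nsmul_eq_mul]
  rw [sum_congr rfl fun x hx => if_pos hx, sum_const, nsmul_eq_mul]
  ring

variable {F : Type*} [Field F] [DecidableEq F]

-- `l = (b, c)` encodes the line `y = b * x + c`; vertical lines are never needed.
abbrev OnLine (p l : F × F) : Prop := p.2 = l.1 * p.1 + l.2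

def incidences (P : Finset (F × F)) (l : F × F) : ℕ :=
  #{p ∈ P | OnLine p l}

lemma card_le_incidences_add_mul {A : Finset F} {a b : F} (ha : a ∈ A) (hb : b ∈ A) :
    #A ≤ incidences ((A + A) ×ˢ (A * A)) (b, -(a * b)) := by
  refine card_le_card_of_injOn (fun c => (a + c, b * c)) (fun c hc => ?_)
    fun c _ c' _ h => add_left_cancel (Prod.mk.inj h).1
  rw [mem_coe, mem_filter, mem_product]
  exact ⟨⟨add_mem_add ha hc, mul_mem_mul hb hc⟩, by ring⟩

variable [Fintype F]

lemma card_lines_through (p : F × F) :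
    #{l : F × F | OnLine p l} = Fintype.card F := by
  rw [← card_univ]
  refine card_nbij' Prod.fst (fun b => (b, p.2 - b * p.1)) (by simp) (fun b _ => ?_)
    (fun l hl => ?_) (fun _ _ => rfl)
  · simp [OnLine]
  · simp only [mem_coe, mem_filter, mem_univ, true_and] at hl
    ext <;> simp [hl]

lemma card_lines_through_two_of_fst_ne {p p' : F × F} (h : p.1 ≠ p'.1) :
    #{l : F × F | OnLine p l ∧ OnLine p' l} = 1 := by
  have hd : p.1 - p'.1 ≠ 0 := sub_ne_zero.mpr h
  rw [card_eq_one]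
  refine ⟨((p.2 - p'.2) / (p.1 - p'.1), p.2 - (p.2 - p'.2) / (p.1 - p'.1) * p.1), ?_⟩
  ext ⟨b, c⟩
  simp only [OnLine, mem_filter, mem_univ, true_and, mem_singleton, Prod.mk.injEq]
  constructor
  · rintro ⟨h1, h2⟩
    have hb : b = (p.2 - p'.2) / (p.1 - p'.1) := by
      field_simp
      rw [h1, h2]; ring
    exact ⟨hb, by rw [← hb, h1]; ring⟩
  · rintro ⟨rfl, rfl⟩
    constructor
    · ring
    · field_simp
      ring

lemma card_lines_through_two (p p' : F × F) :
    #{l : F × F | OnLine p l ∧ OnLine p' l} =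
      if p.1 = p'.1 then (if p.2 = p'.2 then Fintype.card F else 0) else 1 := by
  split_ifs with h1 h2
  · obtain rfl : p = p' := Prod.ext h1 h2
    simpa using card_lines_through p
  · rw [card_eq_zero, filter_eq_empty_iff]
    rintro l - ⟨e1, e2⟩
    exact h2 (by rw [e1, e2, h1])
  · exact card_lines_through_two_of_fst_ne h1

lemma sum_incidences (P : Finset (F × F)) :
    ∑ l, incidences P l = #P * Fintype.card F := by
  simp only [incidences, card_filter]
  rw [sum_comm, ← smul_eq_mul, ← sum_const]
  exact sum_congr rfl fun p _ => by rw [← card_filter, card_lines_through]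

lemma sum_incidences_sq (P : Finset (F × F)) :
    ∑ l, incidences P l ^ 2 =
      ∑ p ∈ P, ∑ p' ∈ P, #{l : F × F | OnLine p l ∧ OnLine p' l} := by
  simp only [incidences, sq, card_filter, sum_mul_sum, ← ite_and, boole_mul]
  rw [sum_comm]
  exact sum_congr rfl fun p _ => sum_comm

lemma sum_incidences_product_sq (S T : Finset F) :
    ∑ l, (incidences (S ×ˢ T) l : ℝ) ^ 2 =
      #S * #T * Fintype.card F + (#S ^ 2 - #S) * #T ^ 2 := by
  have hpairs (x x' : F) : ∑ y ∈ T, ∑ y' ∈ T,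
      ((if x = x' then (if y = y' then Fintype.card F else 0) else 1 : ℕ) : ℝ) =
        if x = x' then (#T * Fintype.card F : ℝ) else #T ^ 2 := by
    split_ifs
    · simp [sum_ite_eq]
    · simp [sq]
  simp only [← Nat.cast_pow, ← Nat.cast_sum, sum_incidences_sq]
  simp only [card_lines_through_two, Nat.cast_sum, sum_product]
  rw [sum_congr rfl fun x _ => sum_comm]
  simp only [hpairs, sum_sum_ite_eq]
  push_cast
  ring

lemma sum_sq_incidences_sub_mean (S T : Finset F) :
    ∑ l, ((incidences (S ×ˢ T) l : ℝ) - #S * #T / Fintype.card F) ^ 2 =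
      #S * #T * (Fintype.card F - #T) := by
  have hq : (Fintype.card F : ℝ) ≠ 0 := by positivity
  have hsum : ∑ l, (incidences (S ×ˢ T) l : ℝ) = #S * #T * Fintype.card F := by
    exact_mod_cast (sum_incidences (S ×ˢ T)).trans (by rw [card_product])
  simp only [sub_sq, sum_add_distrib, sum_sub_distrib, ← sum_mul, ← mul_sum, sum_const,
    card_univ, Fintype.card_prod, nsmul_eq_mul, sum_incidences_product_sq, hsum]
  field_simp
  push_cast
  ring

lemma sum_incidences_le (S T : Finset F) (L : Finset (F × F)) :
    ∑ l ∈ L, (incidences (S ×ˢ T) l : ℝ) ≤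
      #L * (#S * #T) / Fintype.card F + √(#L * (#S * #T * (Fintype.card F - #T))) := by
  set c : ℝ := #S * #T / Fintype.card F
  have hdev : ∑ l ∈ L, ((incidences (S ×ˢ T) l : ℝ) - c) ≤
      √(#L * (#S * #T * (Fintype.card F - #T))) := by
    refine Real.le_sqrt_of_sq_le ?_
    calc (∑ l ∈ L, ((incidences (S ×ˢ T) l : ℝ) - c)) ^ 2
        ≤ #L * ∑ l ∈ L, ((incidences (S ×ˢ T) l : ℝ) - c) ^ 2 := sq_sum_le_card_mul_sum_sq
      _ ≤ #L * ∑ l, ((incidences (S ×ˢ T) l : ℝ) - c) ^ 2 := by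
        gcongr _ * ?_
        exact sum_le_univ_sum_of_nonneg fun _ => sq_nonneg _
      _ = #L * (#S * #T * (Fintype.card F - #T)) := by rw [sum_sq_incidences_sub_mean]
  rw [sum_sub_distrib, sum_const, nsmul_eq_mul] at hdev
  have : (#L : ℝ) * c = #L * (#S * #T) / Fintype.card F := by ring
  linarith

lemma sq_mul_card_le_of_subset {A B : Finset F} (hBA : B ⊆ A) (h0 : (0 : F) ∉ B) :
    (#A : ℝ) ^ 2 * #B ≤ #A * #B * (#(A + A) * #(A * A)) / Fintype.card F +
      √(#A * #B * (#(A + A) * #(A * A) * (Fintype.card F - #(A * A)))) := by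
  set L := (A ×ˢ B).image fun ab => (ab.2, -(ab.1 * ab.2))
  have hL : #L = #A * #B := by
    rw [card_image_of_injOn, card_product]
    rintro ⟨a, b⟩ hab ⟨a', b'⟩ - h
    simp only [coe_product, Set.mem_prod, mem_coe] at hab
    obtain ⟨rfl, h⟩ := Prod.mk.inj h
    have hb : b ≠ 0 := fun hb => h0 (hb ▸ hab.2)
    exact Prod.ext (mul_right_cancel₀ hb (neg_inj.mp h)) rfl
  have hrich : ∀ l ∈ L, #A ≤ incidences ((A + A) ×ˢ (A * A)) l := by
    simp only [L, forall_mem_image, mem_product]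
    exact fun ab hab => card_le_incidences_add_mul hab.1 (hBA hab.2)
  calc (#A : ℝ) ^ 2 * #B = ∑ _l ∈ L, (#A : ℝ) := by simp [hL]; ring
    _ ≤ ∑ l ∈ L, (incidences ((A + A) ×ˢ (A * A)) l : ℝ) :=
      sum_le_sum fun l hl => by exact_mod_cast hrich l hl
    _ ≤ _ := by simpa [hL, mul_assoc] using sum_incidences_le (A + A) (A * A) L

lemma sq_le_sqrt_mul_sqrt_of_le {k m n q : ℝ} (hk : 0 ≤ k) (hkq : k ^ 2 ≤ q) (hkm : k ≤ m)
    (hkn : k ≤ n) : k ^ 2 ≤ √q * √(m * n) := by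
  have hmn : k ^ 2 ≤ m * n := by
    rw [sq]; exact mul_le_mul hkm hkn hk (hk.trans hkm)
  have hq : 0 ≤ q := (sq_nonneg k).trans hkq
  rw [← Real.sqrt_mul hq]
  exact Real.le_sqrt_of_sq_le (by nlinarith [mul_le_mul hkq hmn (sq_nonneg k) hq])

lemma sq_le_of_sq_mul_le {k k' m n q : ℝ} (hk' : 0 < k') (hkk' : k - 1 ≤ k') (hq : 0 ≤ q)
    (hqkn : q ≤ k * n) (hmn : 0 ≤ m * n)
    (h : k ^ 2 * k' ≤ k * k' * (m * n) / q + √(k * k' * (m * n * (q - n)))) :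
    k ^ 2 ≤ m * n * k / q + √q * √(m * n) := by
  have hroot : √(k * k' * (m * n * (q - n))) ≤ k' * (√q * √(m * n)) := by
    have : k * (q - n) ≤ k' * q := by nlinarith
    calc √(k * k' * (m * n * (q - n))) ≤ √((k' * (√q * √(m * n))) ^ 2) := by
          refine Real.sqrt_le_sqrt ?_
          rw [mul_pow, mul_pow, Real.sq_sqrt hq, Real.sq_sqrt hmn]
          nlinarith [mul_le_mul_of_nonneg_left this (mul_nonneg hk'.le hmn)]
      _ = k' * (√q * √(m * n)) := Real.sqrt_sq (by positivity)
  have : k' * k ^ 2 ≤ k' * (m * n * k / q + √q * √(m * n)) := by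
    calc k' * k ^ 2 ≤ k * k' * (m * n) / q + k' * (√q * √(m * n)) := by linarith
      _ = _ := by ring
  exact le_of_mul_le_mul_left this hk'

end VinhSumProduct

theorem vinh_sum_product_general (F : Type*) [Field F] [Fintype F] [DecidableEq F]
    (A : Finset F) :
    ((A.card : ℝ)) ^ 2 ≤
      ((A + A).card : ℝ) * ((A * A).card : ℝ) * (A.card : ℝ) / (Fintype.card F : ℝ) +
        Real.sqrt (Fintype.card F) *
          Real.sqrt (((A + A).card : ℝ) * ((A * A).card : ℝ)) := by
  have hm : (#A : ℝ) ≤ #(A + A) := by exact_mod_cast card_le_card_add_self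
  have hn : (#A : ℝ) ≤ #(A * A) := by exact_mod_cast card_le_card_mul_self₀
  have hnq : (#(A * A) : ℝ) ≤ Fintype.card F := by exact_mod_cast card_le_univ _
  have hq : (1 : ℝ) ≤ Fintype.card F := by exact_mod_cast Fintype.card_pos
  -- For `|A|² ≤ q` the square-root term alone suffices; otherwise `q < |A| |A·A|`, which
  -- absorbs the loss from discarding the slope `0`.
  rcases le_or_gt ((#A : ℝ) ^ 2) (Fintype.card F) with hsmall | hlarge
  · have := VinhSumProduct.sq_le_sqrt_mul_sqrt_of_le (by positivity) hsmall hm hn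
    have : 0 ≤ (#(A + A) * #(A * A) * #A / Fintype.card F : ℝ) := by positivity
    linarith
  · have hB : (#A : ℝ) - 1 ≤ #(A.erase 0) := by
      rw [sub_le_iff_le_add]
      exact_mod_cast (by have := pred_card_le_card_erase (s := A) (a := 0); omega :
        #A ≤ #(A.erase 0) + 1)
    have hk : 1 < (#A : ℝ) := by nlinarith
    exact VinhSumProduct.sq_le_of_sq_mul_le (by linarith) hB (by positivity) (by nlinarith)
      (by positivity)
      (VinhSumProduct.sq_mul_card_le_of_subset (erase_subset 0 A) (notMem_erase 0 A))

theorem vinh_sum_product (F : Type*) [Field F] [Fintype F] [DecidableEq F]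
    (hodd : Odd (Fintype.card F)) (A : Finset F) :
    ((A.card : ℝ)) ^ 2 ≤
      ((A + A).card : ℝ) * ((A * A).card : ℝ) * (A.card : ℝ) / (Fintype.card F : ℝ) +
        Real.sqrt (Fintype.card F) *
          Real.sqrt (((A + A).card : ℝ) * ((A * A).card : ℝ)) :=
  vinh_sum_product_general F A
end

section
/- There exists an absolute constant C > 0 such that the following holds. Let 𝔽_q be a finite field with q elements, q odd. For every finite subset A ⊆ 𝔽_q, writing m = |A+A| and n = |A·A|, one has |A|³ ≤ C · ( m²n|A|/q + q^{1/2}·mn ). -/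
open Finset Pointwise

/-!
Put `P = (A + A) × (A * A)`. For `a ∈ A \ {0}` and `b ∈ A` the line `y = a (x - b)` contains the
`|A|` points `(b + c, a c)`, `c ∈ A`, so these `|A \ {0}| |A|` distinct lines have at least
`|A \ {0}| |A|²` incidences with `P`. On the other hand two points of `𝔽_q²` lie on at most one
common non-vertical line, so the numbers of points of `P` on the `q²` non-vertical lines have mean
`|P| / q` and total squared deviation at most `q |P|`; by Cauchy–Schwarz any `L` of these lines
have at most `L |P| / q + √(L |P| q)` incidences with `P`. Comparing the two bounds, with
`|A| ≤ |A + A|` and `|A| ≤ |A * A|`, gives the theorem with `C = 2`.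
-/

section Incidences

variable {F : Type*} [Field F] [DecidableEq F]

/-- `ℓ = (a, b)` encodes the non-vertical line `y = a * x + b`. -/
def pointsOn (P : Finset (F × F)) (ℓ : F × F) : Finset (F × F) :=
  {p ∈ P | p.2 = ℓ.1 * p.1 + ℓ.2}

variable [Fintype F]

def linesThrough (p : F × F) : Finset (F × F) :=
  {ℓ | p.2 = ℓ.1 * p.1 + ℓ.2}

lemma card_linesThrough (p : F × F) : #(linesThrough p) = Fintype.card F := by
  have : linesThrough p = univ.image fun a => (a, p.2 - a * p.1) := by
    ext ⟨a, b⟩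
    simp [linesThrough, eq_sub_iff_add_eq, add_comm, eq_comm]
  rw [this, card_image_of_injective _ fun a a' h => congrArg Prod.fst h, card_univ]

lemma card_inter_linesThrough_le_one {p p' : F × F} (h : p ≠ p') :
    #(linesThrough p ∩ linesThrough p') ≤ 1 := by
  rw [card_le_one]
  rintro ⟨a, b⟩ hab ⟨a', b'⟩ hab'
  simp only [linesThrough, mem_inter, mem_filter, mem_univ, true_and] at hab hab'
  obtain ⟨hp, hp'⟩ := hab
  obtain ⟨hq, hq'⟩ := hab'
  have hx : p.1 ≠ p'.1 := fun hx => h (Prod.ext hx (by rw [hp, hp', hx]))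
  have ha : a = a' := by
    have : (a - a') * (p.1 - p'.1) = 0 := by linear_combination hq - hp + hp' - hq'
    simpa [sub_eq_zero, hx] using this
  subst ha
  simp only [Prod.mk.injEq, true_and]
  linear_combination hq - hp

lemma sum_card_pointsOn_slope (P : Finset (F × F)) (a : F) :
    ∑ b, #(pointsOn P (a, b)) = #P := by
  rw [card_eq_sum_card_fiberwise (f := fun p => p.2 - a * p.1) (t := univ)
    fun _ _ => mem_univ _]
  simp only [pointsOn, sub_eq_iff_eq_add']

lemma sum_card_pointsOn (P : Finset (F × F)) :
    ∑ ℓ, (#(pointsOn P ℓ) : ℝ) = Fintype.card F * #P := by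
  simp [Fintype.sum_prod_type, ← Nat.cast_sum, sum_card_pointsOn_slope]

lemma sum_card_pointsOn_sq (P : Finset (F × F)) :
    ∑ ℓ, #(pointsOn P ℓ) ^ 2 = ∑ p ∈ P, ∑ p' ∈ P, #(linesThrough p ∩ linesThrough p') := by
  simp only [pointsOn, linesThrough, card_filter, sq, sum_mul_sum, ← filter_and,
    ite_zero_mul_ite_zero, mul_one]
  rw [sum_comm]
  refine sum_congr rfl fun p _ => ?_
  rw [sum_comm]

lemma sum_card_pointsOn_sq_le (P : Finset (F × F)) :
    ∑ ℓ, #(pointsOn P ℓ) ^ 2 ≤ #P * Fintype.card F + #P ^ 2 := by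
  rw [sum_card_pointsOn_sq]
  calc ∑ p ∈ P, ∑ p' ∈ P, #(linesThrough p ∩ linesThrough p')
      ≤ ∑ p ∈ P, (Fintype.card F + #P) := by
        refine sum_le_sum fun p hp => ?_
        rw [← add_sum_erase _ _ hp, inter_self, card_linesThrough]
        gcongr
        calc ∑ p' ∈ P.erase p, #(linesThrough p ∩ linesThrough p')
            ≤ ∑ p' ∈ P.erase p, 1 :=
              sum_le_sum fun p' hp' => card_inter_linesThrough_le_one (ne_of_mem_erase hp').symm
          _ ≤ #P := by simpa using card_erase_le
    _ = #P * Fintype.card F + #P ^ 2 := by simp [mul_add, sq]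

lemma sum_sq_card_pointsOn_sub_le (P : Finset (F × F)) :
    ∑ ℓ, ((#(pointsOn P ℓ) : ℝ) - #P / Fintype.card F) ^ 2 ≤ #P * Fintype.card F := by
  have hq : (Fintype.card F : ℝ) ≠ 0 := by positivity
  have hsq : (∑ ℓ, #(pointsOn P ℓ) ^ 2 : ℝ) ≤ #P * Fintype.card F + #P ^ 2 := by
    exact_mod_cast sum_card_pointsOn_sq_le P
  simp only [sub_sq, sum_add_distrib, sum_sub_distrib, ← sum_mul, ← mul_sum, sum_card_pointsOn,
    sum_const, card_univ, Fintype.card_prod, nsmul_eq_mul]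
  field_simp
  push_cast
  nlinarith [hsq]

lemma sum_card_pointsOn_le (P L : Finset (F × F)) :
    ∑ ℓ ∈ L, (#(pointsOn P ℓ) : ℝ) ≤
      #L * #P / Fintype.card F + √(#L * #P * Fintype.card F) := by
  set c : ℝ := #P / Fintype.card F
  have hdev : ∑ ℓ ∈ L, ((#(pointsOn P ℓ) : ℝ) - c) ≤ √(#L * #P * Fintype.card F) := by
    refine (le_abs_self _).trans (Real.abs_le_sqrt ?_)
    calc (∑ ℓ ∈ L, ((#(pointsOn P ℓ) : ℝ) - c)) ^ 2
        ≤ #L * ∑ ℓ ∈ L, ((#(pointsOn P ℓ) : ℝ) - c) ^ 2 := sq_sum_le_card_mul_sum_sq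
      _ ≤ #L * (#P * Fintype.card F) := by
        gcongr
        exact (sum_le_univ_sum_of_nonneg fun _ => sq_nonneg _).trans
          (sum_sq_card_pointsOn_sub_le P)
      _ = #L * #P * Fintype.card F := by ring
  rw [sum_sub_distrib, sum_const, nsmul_eq_mul] at hdev
  linarith [show (#L : ℝ) * c = #L * #P / Fintype.card F by ring]

end Incidences

section SumProduct

variable {F : Type*} [Field F] [DecidableEq F]

/-- The line `y = a (x - b)` meets `(A + A) × (A * A)` in the points `(b + c, a * c)`, `c ∈ A`. -/
lemma card_le_card_pointsOn_add_mul (A : Finset F) {a b : F} (ha : a ∈ A) (hb : b ∈ A) :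
    #A ≤ #(pointsOn ((A + A) ×ˢ (A * A)) (a, -(a * b))) := by
  refine card_le_card_of_injOn (fun c => (b + c, a * c)) (fun c hc => ?_)
    fun c _ c' _ h => add_left_cancel (congrArg Prod.fst h)
  simp only [pointsOn, coe_filter, Set.mem_ofPred_eq, mem_product]
  exact ⟨⟨add_mem_add hb hc, mul_mem_mul ha hc⟩, by ring⟩

lemma card_erase_zero_mul_card_sq_le [Fintype F] (A : Finset F) :
    (#(A.erase 0) * #A * #A : ℝ) ≤
      #(A.erase 0) * #A * (#(A + A) * #(A * A)) / Fintype.card F +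
        √(#(A.erase 0) * #A * (#(A + A) * #(A * A)) * Fintype.card F) := by
  set P := (A + A) ×ˢ (A * A)
  set L := ((A.erase 0) ×ˢ A).image fun x => (x.1, -(x.1 * x.2))
  have hL : #L = #(A.erase 0) * #A := by
    rw [card_image_of_injOn, card_product]
    rintro ⟨a, b⟩ hab ⟨a', b'⟩ hab' h
    simp only [coe_product, Set.mem_prod, mem_coe, mem_erase] at hab hab'
    simp only [Prod.mk.injEq, neg_inj] at h ⊢
    obtain ⟨rfl, h⟩ := h
    exact ⟨rfl, mul_left_cancel₀ hab.1.1 h⟩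
  have hlow : #(A.erase 0) * #A * #A ≤ ∑ ℓ ∈ L, #(pointsOn P ℓ) := by
    rw [← hL, ← smul_eq_mul]
    refine card_nsmul_le_sum _ _ _ fun ℓ hℓ => ?_
    obtain ⟨⟨a, b⟩, hab, rfl⟩ := mem_image.mp hℓ
    simp only [mem_product, mem_erase] at hab
    exact card_le_card_pointsOn_add_mul A hab.1.2 hab.2
  have hup := sum_card_pointsOn_le P L
  rw [hL, card_product] at hup
  push_cast at hup
  exact_mod_cast (show ((#(A.erase 0) * #A * #A : ℕ) : ℝ) ≤ _ by exact_mod_cast hlow).trans hup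

lemma card_pow_three_le [Fintype F] (A : Finset F) :
    (#A : ℝ) ^ 3 ≤ #(A + A) ^ 2 * #(A * A) * #A / Fintype.card F +
      2 * (√(Fintype.card F) * #(A + A) * #(A * A)) := by
  have hkey := card_erase_zero_mul_card_sq_le A
  have hα'm : (#(A.erase 0) : ℝ) ≤ #(A + A) := by
    exact_mod_cast card_erase_le.trans card_le_card_add_self
  have hαα' : (#A : ℝ) ≤ #(A.erase 0) + 1 := by
    have := pred_card_le_card_erase (s := A) (a := 0)
    exact_mod_cast (show #A ≤ #(A.erase 0) + 1 by omega)
  have hαm : (#A : ℝ) ≤ #(A + A) := by exact_mod_cast card_le_card_add_self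
  have hαn : (#A : ℝ) ≤ #(A * A) := by exact_mod_cast card_le_card_mul_self₀
  have hq_sqrt : (1 : ℝ) ≤ √(Fintype.card F) :=
    Real.one_le_sqrt.mpr (by exact_mod_cast Fintype.card_pos)
  set α := (#A : ℝ)
  set α' := (#(A.erase 0) : ℝ)
  set m := (#(A + A) : ℝ)
  set n := (#(A * A) : ℝ)
  set q := (Fintype.card F : ℝ)
  have hincidence : α' * α * (m * n) / q ≤ m ^ 2 * n * α / q := by
    rw [show m ^ 2 * n * α = m * α * (m * n) by ring]
    gcongr
  have hsqrt : √(α' * α * (m * n) * q) ≤ √q * m * n := by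
    calc √(α' * α * (m * n) * q) ≤ √((m * n) ^ 2 * q) := by
          gcongr
          rw [sq]
          gcongr
      _ = √q * m * n := by rw [Real.sqrt_mul (by positivity), Real.sqrt_sq (by positivity)]; ring
  have hcube : α ^ 3 ≤ α' * α * α + α * α := by nlinarith [sq_nonneg α]
  have hsq : α * α ≤ √q * m * n := by
    calc α * α ≤ 1 * m * n := by rw [one_mul]; gcongr
      _ ≤ √q * m * n := by gcongr
  linarith

end SumProduct

theorem hart_iosevich_solymosi_sum_product :
    ∃ C > (0:ℝ),
      ∀ (F : Type) [Field F] [Fintype F] [DecidableEq F],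
      Odd (Fintype.card F) →
      ∀ A : Finset F,
      ((A.card : ℝ)) ^ 3 ≤
        C * (((A + A).card : ℝ) ^ 2 * ((A * A).card : ℝ) * (A.card : ℝ) / (Fintype.card F : ℝ) +
          Real.sqrt (Fintype.card F) * ((A + A).card : ℝ) * ((A * A).card : ℝ)) := by
  refine ⟨2, two_pos, fun F _ _ _ _ A => (card_pow_three_le A).trans ?_⟩
  have : (0 : ℝ) ≤ #(A + A) ^ 2 * #(A * A) * #A / Fintype.card F := by positivity
  linarith
end
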